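/- arXiv:1605.07010 — 2 statements merged into one kernel-verified Lean document; each statement's English description precedes it below -/
import Mathlib

section
/- Fix a real parameter q ∈ (0,1]. On the complex vector space with basis B = {γ0, γ1, γ2, γ3, γ4, ρ0, ρ1} define the commutative bilinear multiplication determined by: γ0·x = x for all x ∈ B; γ1·γ1 = γ0; γ2·γ2 = (1/4)·γ0 + (1/4)·γ1 + (1/2)·γ2; γ3·γ3 = γ4·γ4 = (1/9)·γ0 + (2/9)·γ2 + (1/3)·γ3 + (1/3)·γ4; γ1·γ2 = γ2; γ1·γ3 = γ4; γ1·γ4 = γ3; γ2·γ3 = γ2·γ4 = (1/2)·γ3 + (1/2)·γ4; γ3·γ4 = (1/9)·γ1 + (2/9)·γ2 + (1/3)·γ3 + (1/3)·γ4; ρ0·ρ0 = ρ1·ρ1 = (q/12)·γ0 + (q/6)·γ2 + (q/2)·γ3 + (q/4)·γ4 + (1−q)·ρ0; ρ0·ρ1 = (q/12)·γ1 + (q/6)·γ2 + (q/4)·γ3 + (q/2)·γ4 + (1−q)·ρ1; γ1·ρ1 = ρ0; γ1·ρ0 = ρ1; γ2·ρ0 = γ2·ρ1 = (1/2)·ρ0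 + (1/2)·ρ1; γ3·ρ0 = γ4·ρ1 = (2/3)·ρ0 + (1/3)·ρ1; γ4·ρ0 = γ3·ρ1 = (1/3)·ρ0 + (2/3)·ρ1. Then this multiplication is associative, and B is a finite commutative hypergroup with unit γ0 and identity involution. -/
namespace Stmt7

inductive B | γ0 | γ1 | γ2 | γ3 | γ4 | ρ0 | ρ1
  deriving DecidableEq

instance : Fintype B :=
  ⟨{.γ0, .γ1, .γ2, .γ3, .γ4, .ρ0, .ρ1}, fun x => by cases x <;> simp⟩

/-- The structure constants of the hypergroup: `c q i j k` is the coefficient of the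
basis element `k` in the product `i·j`. -/
noncomputable def c (q : ℝ) : B → B → B → ℝ := fun i j =>
  match i, j with
  | .γ0, .γ0 => fun k => match k with | .γ0 => 1 | .γ1 => 0 | .γ2 => 0 | .γ3 => 0 | .γ4 => 0 | .ρ0 => 0 | .ρ1 => 0
  | .γ0, .γ1 => fun k => match k with | .γ0 => 0 | .γ1 => 1 | .γ2 => 0 | .γ3 => 0 | .γ4 => 0 | .ρ0 => 0 | .ρ1 => 0
  | .γ0, .γ2 => fun k => match k with | .γ0 => 0 | .γ1 => 0 | .γ2 => 1 | .γ3 => 0 | .γ4 => 0 | .ρ0 => 0 | .ρ1 => 0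
  | .γ0, .γ3 => fun k => match k with | .γ0 => 0 | .γ1 => 0 | .γ2 => 0 | .γ3 => 1 | .γ4 => 0 | .ρ0 => 0 | .ρ1 => 0
  | .γ0, .γ4 => fun k => match k with | .γ0 => 0 | .γ1 => 0 | .γ2 => 0 | .γ3 => 0 | .γ4 => 1 | .ρ0 => 0 | .ρ1 => 0
  | .γ0, .ρ0 => fun k => match k with | .γ0 => 0 | .γ1 => 0 | .γ2 => 0 | .γ3 => 0 | .γ4 => 0 | .ρ0 => 1 | .ρ1 => 0
  | .γ0, .ρ1 => fun k => match k with | .γ0 => 0 | .γ1 => 0 | .γ2 => 0 | .γ3 => 0 | .γ4 => 0 | .ρ0 => 0 | .ρ1 => 1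
  | .γ1, .γ0 => fun k => match k with | .γ0 => 0 | .γ1 => 1 | .γ2 => 0 | .γ3 => 0 | .γ4 => 0 | .ρ0 => 0 | .ρ1 => 0
  | .γ1, .γ1 => fun k => match k with | .γ0 => 1 | .γ1 => 0 | .γ2 => 0 | .γ3 => 0 | .γ4 => 0 | .ρ0 => 0 | .ρ1 => 0
  | .γ1, .γ2 => fun k => match k with | .γ0 => 0 | .γ1 => 0 | .γ2 => 1 | .γ3 => 0 | .γ4 => 0 | .ρ0 => 0 | .ρ1 => 0
  | .γ1, .γ3 => fun k => match k with | .γ0 => 0 | .γ1 => 0 | .γ2 => 0 | .γ3 => 0 | .γ4 => 1 | .ρ0 => 0 | .ρ1 => 0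
  | .γ1, .γ4 => fun k => match k with | .γ0 => 0 | .γ1 => 0 | .γ2 => 0 | .γ3 => 1 | .γ4 => 0 | .ρ0 => 0 | .ρ1 => 0
  | .γ1, .ρ0 => fun k => match k with | .γ0 => 0 | .γ1 => 0 | .γ2 => 0 | .γ3 => 0 | .γ4 => 0 | .ρ0 => 0 | .ρ1 => 1
  | .γ1, .ρ1 => fun k => match k with | .γ0 => 0 | .γ1 => 0 | .γ2 => 0 | .γ3 => 0 | .γ4 => 0 | .ρ0 => 1 | .ρ1 => 0
  | .γ2, .γ0 => fun k => match k with | .γ0 => 0 | .γ1 => 0 | .γ2 => 1 | .γ3 => 0 | .γ4 => 0 | .ρ0 => 0 | .ρ1 => 0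
  | .γ2, .γ1 => fun k => match k with | .γ0 => 0 | .γ1 => 0 | .γ2 => 1 | .γ3 => 0 | .γ4 => 0 | .ρ0 => 0 | .ρ1 => 0
  | .γ2, .γ2 => fun k => match k with | .γ0 => 1 / 4 | .γ1 => 1 / 4 | .γ2 => 1 / 2 | .γ3 => 0 | .γ4 => 0 | .ρ0 => 0 | .ρ1 => 0
  | .γ2, .γ3 => fun k => match k with | .γ0 => 0 | .γ1 => 0 | .γ2 => 0 | .γ3 => 1 / 2 | .γ4 => 1 / 2 | .ρ0 => 0 | .ρ1 => 0
  | .γ2, .γ4 => fun k => match k with | .γ0 => 0 | .γ1 => 0 | .γ2 => 0 | .γ3 => 1 / 2 | .γ4 => 1 / 2 | .ρ0 => 0 | .ρ1 => 0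
  | .γ2, .ρ0 => fun k => match k with | .γ0 => 0 | .γ1 => 0 | .γ2 => 0 | .γ3 => 0 | .γ4 => 0 | .ρ0 => 1 / 2 | .ρ1 => 1 / 2
  | .γ2, .ρ1 => fun k => match k with | .γ0 => 0 | .γ1 => 0 | .γ2 => 0 | .γ3 => 0 | .γ4 => 0 | .ρ0 => 1 / 2 | .ρ1 => 1 / 2
  | .γ3, .γ0 => fun k => match k with | .γ0 => 0 | .γ1 => 0 | .γ2 => 0 | .γ3 => 1 | .γ4 => 0 | .ρ0 => 0 | .ρ1 => 0
  | .γ3, .γ1 => fun k => match k with | .γ0 => 0 | .γ1 => 0 | .γ2 => 0 | .γ3 => 0 | .γ4 => 1 | .ρ0 => 0 | .ρ1 => 0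
  | .γ3, .γ2 => fun k => match k with | .γ0 => 0 | .γ1 => 0 | .γ2 => 0 | .γ3 => 1 / 2 | .γ4 => 1 / 2 | .ρ0 => 0 | .ρ1 => 0
  | .γ3, .γ3 => fun k => match k with | .γ0 => 1 / 9 | .γ1 => 0 | .γ2 => 2 / 9 | .γ3 => 1 / 3 | .γ4 => 1 / 3 | .ρ0 => 0 | .ρ1 => 0
  | .γ3, .γ4 => fun k => match k with | .γ0 => 0 | .γ1 => 1 / 9 | .γ2 => 2 / 9 | .γ3 => 1 / 3 | .γ4 => 1 / 3 | .ρ0 => 0 | .ρ1 => 0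
  | .γ3, .ρ0 => fun k => match k with | .γ0 => 0 | .γ1 => 0 | .γ2 => 0 | .γ3 => 0 | .γ4 => 0 | .ρ0 => 2 / 3 | .ρ1 => 1 / 3
  | .γ3, .ρ1 => fun k => match k with | .γ0 => 0 | .γ1 => 0 | .γ2 => 0 | .γ3 => 0 | .γ4 => 0 | .ρ0 => 1 / 3 | .ρ1 => 2 / 3
  | .γ4, .γ0 => fun k => match k with | .γ0 => 0 | .γ1 => 0 | .γ2 => 0 | .γ3 => 0 | .γ4 => 1 | .ρ0 => 0 | .ρ1 => 0
  | .γ4, .γ1 => fun k => match k with | .γ0 => 0 | .γ1 => 0 | .γ2 => 0 | .γ3 => 1 | .γ4 => 0 | .ρ0 => 0 | .ρ1 => 0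
  | .γ4, .γ2 => fun k => match k with | .γ0 => 0 | .γ1 => 0 | .γ2 => 0 | .γ3 => 1 / 2 | .γ4 => 1 / 2 | .ρ0 => 0 | .ρ1 => 0
  | .γ4, .γ3 => fun k => match k with | .γ0 => 0 | .γ1 => 1 / 9 | .γ2 => 2 / 9 | .γ3 => 1 / 3 | .γ4 => 1 / 3 | .ρ0 => 0 | .ρ1 => 0
  | .γ4, .γ4 => fun k => match k with | .γ0 => 1 / 9 | .γ1 => 0 | .γ2 => 2 / 9 | .γ3 => 1 / 3 | .γ4 => 1 / 3 | .ρ0 => 0 | .ρ1 => 0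
  | .γ4, .ρ0 => fun k => match k with | .γ0 => 0 | .γ1 => 0 | .γ2 => 0 | .γ3 => 0 | .γ4 => 0 | .ρ0 => 1 / 3 | .ρ1 => 2 / 3
  | .γ4, .ρ1 => fun k => match k with | .γ0 => 0 | .γ1 => 0 | .γ2 => 0 | .γ3 => 0 | .γ4 => 0 | .ρ0 => 2 / 3 | .ρ1 => 1 / 3
  | .ρ0, .γ0 => fun k => match k with | .γ0 => 0 | .γ1 => 0 | .γ2 => 0 | .γ3 => 0 | .γ4 => 0 | .ρ0 => 1 | .ρ1 => 0
  | .ρ0, .γ1 => fun k => match k with | .γ0 => 0 | .γ1 => 0 | .γ2 => 0 | .γ3 => 0 | .γ4 => 0 | .ρ0 => 0 | .ρ1 => 1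
  | .ρ0, .γ2 => fun k => match k with | .γ0 => 0 | .γ1 => 0 | .γ2 => 0 | .γ3 => 0 | .γ4 => 0 | .ρ0 => 1 / 2 | .ρ1 => 1 / 2
  | .ρ0, .γ3 => fun k => match k with | .γ0 => 0 | .γ1 => 0 | .γ2 => 0 | .γ3 => 0 | .γ4 => 0 | .ρ0 => 2 / 3 | .ρ1 => 1 / 3
  | .ρ0, .γ4 => fun k => match k with | .γ0 => 0 | .γ1 => 0 | .γ2 => 0 | .γ3 => 0 | .γ4 => 0 | .ρ0 => 1 / 3 | .ρ1 => 2 / 3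
  | .ρ0, .ρ0 => fun k => match k with | .γ0 => q / 12 | .γ1 => 0 | .γ2 => q / 6 | .γ3 => q / 2 | .γ4 => q / 4 | .ρ0 => 1 - q | .ρ1 => 0
  | .ρ0, .ρ1 => fun k => match k with | .γ0 => 0 | .γ1 => q / 12 | .γ2 => q / 6 | .γ3 => q / 4 | .γ4 => q / 2 | .ρ0 => 0 | .ρ1 => 1 - q
  | .ρ1, .γ0 => fun k => match k with | .γ0 => 0 | .γ1 => 0 | .γ2 => 0 | .γ3 => 0 | .γ4 => 0 | .ρ0 => 0 | .ρ1 => 1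
  | .ρ1, .γ1 => fun k => match k with | .γ0 => 0 | .γ1 => 0 | .γ2 => 0 | .γ3 => 0 | .γ4 => 0 | .ρ0 => 1 | .ρ1 => 0
  | .ρ1, .γ2 => fun k => match k with | .γ0 => 0 | .γ1 => 0 | .γ2 => 0 | .γ3 => 0 | .γ4 => 0 | .ρ0 => 1 / 2 | .ρ1 => 1 / 2
  | .ρ1, .γ3 => fun k => match k with | .γ0 => 0 | .γ1 => 0 | .γ2 => 0 | .γ3 => 0 | .γ4 => 0 | .ρ0 => 1 / 3 | .ρ1 => 2 / 3
  | .ρ1, .γ4 => fun k => match k with | .γ0 => 0 | .γ1 => 0 | .γ2 => 0 | .γ3 => 0 | .γ4 => 0 | .ρ0 => 2 / 3 | .ρ1 => 1 / 3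
  | .ρ1, .ρ0 => fun k => match k with | .γ0 => 0 | .γ1 => q / 12 | .γ2 => q / 6 | .γ3 => q / 4 | .γ4 => q / 2 | .ρ0 => 0 | .ρ1 => 1 - q
  | .ρ1, .ρ1 => fun k => match k with | .γ0 => q / 12 | .γ1 => 0 | .γ2 => q / 6 | .γ3 => q / 2 | .γ4 => q / 4 | .ρ0 => 1 - q | .ρ1 => 0

/-- The bilinear multiplication on the complex vector space with basis `B`. -/
noncomputable def mul (q : ℝ) (f g : B → ℂ) : B → ℂ :=
  fun k => ∑ i : B, ∑ j : B, f i * g j * (c q i j k : ℂ)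

/-- The basis vector attached to `b : B`. -/
def bas (b : B) : B → ℂ := fun k => if k = b then 1 else 0

/-- The involution of the hypergroup. -/
def inv : B → B := fun b => b

/-!
By bilinearity, associativity of a product given by structure constants `c i j k` amounts to
the identity `∑ m, c i j m * c m k l = ∑ m, c j k m * c i m l` on basis elements. For the table
at hand every instance of it is a polynomial identity in `q`, and the remaining axioms are
read off the table entry by entry.
-/

open Finset

section StructureConstants

variable {ι R : Type*} [Fintype ι] [CommSemiring R]

def structMul (c : ι → ι → ι → R) (f g : ι → R) : ι → R :=
  fun k => ∑ i, ∑ j, f i * g j * c i j k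

theorem structMul_comm {c : ι → ι → ι → R} (hc : ∀ i j, c i j = c j i) (f g : ι → R) :
    structMul c f g = structMul c g f := by
  funext k
  rw [structMul, structMul, sum_comm]
  exact sum_congr rfl fun j _ => sum_congr rfl fun i _ => by rw [hc, mul_comm (f i)]

theorem structMul_assoc {c : ι → ι → ι → R}
    (hc : ∀ i j k l, ∑ m, c i j m * c m k l = ∑ m, c j k m * c i m l) (f g h : ι → R) :
    structMul c (structMul c f g) h = structMul c f (structMul c g h) := by
  funext l
  calc structMul c (structMul c f g) h l
      = ∑ i, ∑ j, ∑ k, f i * g j * h k * ∑ m, c i j m * c m k l := by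
        simp only [structMul, sum_mul, mul_sum]
        rw [sum_comm_cycle]
        refine sum_congr rfl fun i _ => ?_
        rw [sum_comm_cycle]
        refine sum_congr rfl fun j _ => ?_
        rw [sum_comm]
        exact sum_congr rfl fun k _ => sum_congr rfl fun m _ => by ring
    _ = ∑ i, ∑ j, ∑ k, f i * g j * h k * ∑ m, c j k m * c i m l := by simp only [hc]
    _ = structMul c f (structMul c g h) l := by
        simp only [structMul, sum_mul, mul_sum]
        refine sum_congr rfl fun i _ => ?_
        rw [sum_comm_cycle]
        exact sum_congr rfl fun j _ => sum_congr rfl fun k _ => sum_congr rfl fun m _ => by ring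

theorem structMul_single_single [DecidableEq ι] (c : ι → ι → ι → R) (a b : ι) :
    structMul c (Pi.single a 1) (Pi.single b 1) = c a b := by
  funext k
  simp [structMul, Pi.single_apply]

end StructureConstants

theorem sum_univ_B {M : Type*} [AddCommMonoid M] (f : B → M) :
    ∑ x : B, f x = f .γ0 + f .γ1 + f .γ2 + f .γ3 + f .γ4 + f .ρ0 + f .ρ1 := by
  rw [show (univ : Finset B) = {.γ0, .γ1, .γ2, .γ3, .γ4, .ρ0, .ρ1} from rfl]
  simp [add_assoc]

theorem mul_eq_structMul (q : ℝ) : mul q = structMul fun i j k => (c q i j k : ℂ) := rfl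

theorem bas_eq_single (b : B) : bas b = Pi.single b 1 := by
  funext k
  simp [bas, Pi.single_apply]

theorem mul_bas_bas (q : ℝ) (a b : B) : mul q (bas a) (bas b) = fun k => (c q a b k : ℂ) := by
  rw [mul_eq_structMul, bas_eq_single, bas_eq_single, structMul_single_single]

theorem c_comm (q : ℝ) (i j : B) : c q i j = c q j i := by
  cases i <;> cases j <;> rfl

set_option maxHeartbeats 1000000 in
theorem c_assoc (q : ℝ) (i j k l : B) :
    ∑ m, c q i j m * c q m k l = ∑ m, c q j k m * c q i m l := by
  cases i <;> cases j <;> cases k <;> cases l <;> rw [sum_univ_B, sum_univ_B] <;> dsimp only [c] <;>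
    ring

theorem c_γ0_left (q : ℝ) (b k : B) : c q .γ0 b k = if k = b then 1 else 0 := by
  cases b <;> cases k <;> rfl

theorem c_nonneg {q : ℝ} (hq : 0 ≤ q) (hq1 : q ≤ 1) (i j k : B) : 0 ≤ c q i j k := by
  cases i <;> cases j <;> cases k <;> dsimp only [c] <;> linarith

theorem sum_c (q : ℝ) (i j : B) : ∑ k, c q i j k = 1 := by
  cases i <;> cases j <;> rw [sum_univ_B] <;> dsimp only [c] <;> ring

theorem c_γ0_pos_iff {q : ℝ} (hq : 0 < q) (i j : B) : 0 < c q i j .γ0 ↔ j = i := by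
  cases i <;> cases j <;> simp [c, hq]

theorem hypergroup_axioms (q : ℝ) (hq : 0 < q) (hq1 : q ≤ 1) :
    (∀ f g h : B → ℂ, mul q (mul q f g) h = mul q f (mul q g h)) ∧
    (∀ f g : B → ℂ, mul q f g = mul q g f) ∧
    (∀ b : B, mul q (bas B.γ0) (bas b) = bas b) ∧
    (∀ i j k : B, 0 ≤ c q i j k) ∧
    (∀ i j : B, ∑ k : B, c q i j k = 1) ∧
    (∀ i j : B, 0 < c q i j B.γ0 ↔ j = inv i) := by
  have hassoc (i j k l : B) :
      ∑ m, (c q i j m : ℂ) * c q m k l = ∑ m, (c q j k m : ℂ) * c q i m l := by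
    exact_mod_cast c_assoc q i j k l
  refine ⟨structMul_assoc hassoc, structMul_comm fun i j => by rw [c_comm],
    fun b => ?_, c_nonneg hq.le hq1, sum_c q, c_γ0_pos_iff hq⟩
  funext k
  simp [mul_bas_bas, c_γ0_left, bas, apply_ite]

end Stmt7
end

section
/- Let A be a finite abelian group, G a finite group, α : G → Aut(A) an action, and K = A ⋊_α G. For every class function f : G → ℂ, every a ∈ A and every g ∈ G, (Ind_G^K f)(a, g) = (Σ_{σ ∈ Â, g·σ = σ} σ(a)) · f(g), where the sum is over the characters of A fixed by g. (This is the group case of Proposition 4.6(3).) -/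
namespace Stmt11

open scoped Classical in
/-- The function induced from a subgroup `H` of a finite group `K`:
`(Ind_H^K f)(k) = (1/|H|) · Σ_{t ∈ K, t k t⁻¹ ∈ H} f (t k t⁻¹)`. -/
noncomputable def ind {K : Type*} [Group K] [Fintype K] (H : Subgroup K) (f : K → ℂ) :
    K → ℂ :=
  fun k => (1 / (Nat.card H : ℂ)) * ∑ t : K, if t * k * t⁻¹ ∈ H then f (t * k * t⁻¹) else 0

instance {A G : Type*} [Group A] [Fintype A] [Group G] [Fintype G] {α : G →* MulAut A} :
    Fintype (A ⋊[α] G) :=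
  Fintype.ofEquiv (A × G)
    { toFun := fun p => ⟨p.1, p.2⟩
      invFun := fun x => (x.left, x.right)
      left_inv := fun _ => rfl
      right_inv := fun _ => rfl }

open scoped Classical

instance instNeZeroExpC (A : Type*) [CommGroup A] [Fintype A] : NeZero ((Monoid.exponent A : ℂ)) :=
  ⟨by exact_mod_cast Monoid.exponent_ne_zero_of_finite⟩

noncomputable instance instFintypeChar (A : Type*) [CommGroup A] [Fintype A] :
    Fintype (A →* ℂˣ) :=
  Fintype.ofEquiv A (CommGroup.monoidHom_mulEquiv_of_hasEnoughRootsOfUnity A ℂ).some.symm.toEquiv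

lemma char_sum (A : Type*) [CommGroup A] [Fintype A] (a : A) :
    ∑ σ : A →* ℂˣ, ((σ a : ℂˣ) : ℂ) = if a = 1 then (Nat.card A : ℂ) else 0 := by
  split_ifs with h
  · subst h
    have := Fintype.card_congr (CommGroup.monoidHom_mulEquiv_of_hasEnoughRootsOfUnity A ℂ).some.toEquiv
    simp [Nat.card_eq_fintype_card, this]
  · obtain ⟨τ, hτ⟩ := CommGroup.exists_apply_ne_one_of_hasEnoughRootsOfUnity A ℂ h
    have key : ∑ σ : A →* ℂˣ, ((σ a : ℂˣ) : ℂ)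
        = ∑ σ : A →* ℂˣ, (((τ * σ) a : ℂˣ) : ℂ) :=
      (Fintype.sum_equiv (Equiv.mulLeft τ) _ _ (fun σ => rfl)).symm
    have key2 : ∑ σ : A →* ℂˣ, (((τ * σ) a : ℂˣ) : ℂ)
        = (τ a : ℂ) * ∑ σ : A →* ℂˣ, ((σ a : ℂˣ) : ℂ) := by
      rw [Finset.mul_sum]
      refine Finset.sum_congr rfl fun σ _ => ?_
      simp
    have h1 : ((τ a : ℂˣ) : ℂ) ≠ 1 := by
      simpa using fun hh => hτ (Units.ext hh)
    have := key.trans key2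
    have h2 : ((τ a : ℂ) - 1) * ∑ σ : A →* ℂˣ, ((σ a : ℂˣ) : ℂ) = 0 := by
      ring_nf; linear_combination -this
    rcases mul_eq_zero.mp h2 with h3 | h3
    · exact absurd (by linear_combination h3) h1
    · exact h3

lemma fixed_char_sum (A : Type*) [CommGroup A] [Fintype A] (φ : A →* A) (a : A) :
    ∑ᶠ σ ∈ {σ : A →* ℂˣ | ∀ b : A, σ (φ b) = 1}, ((σ a : ℂˣ) : ℂ)
      = (Fintype.card {c : A // φ c = a} : ℂ) := by
  set S : Set (A →* ℂˣ) := {σ : A →* ℂˣ | ∀ b : A, σ (φ b) = 1} with hS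
  let Q := A ⧸ φ.range
  let e : (Q →* ℂˣ) ≃ S :=
    { toFun := fun ψ => ⟨ψ.comp (QuotientGroup.mk' φ.range), fun b => by
        have h0 : (QuotientGroup.mk' φ.range) (φ b) = 1 :=
          (QuotientGroup.eq_one_iff _).mpr (MonoidHom.mem_range.mpr ⟨b, rfl⟩)
        simp [h0]⟩
      invFun := fun σ => QuotientGroup.lift φ.range σ.1 (fun x hx => by
        obtain ⟨b, rfl⟩ := MonoidHom.mem_range.mp hx
        exact σ.2 b)
      left_inv := fun ψ => by
        refine QuotientGroup.monoidHom_ext _ ?_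
        ext b
        rfl
      right_inv := fun σ => by
        ext b
        rfl }
  have h1 : ∑ᶠ σ ∈ S, ((σ a : ℂˣ) : ℂ) = ∑ σ : S, ((σ.1 a : ℂˣ) : ℂ) := by
    rw [finsum_mem_eq_toFinset_sum]
    exact (Finset.sum_subtype _ (fun x => by simp) _)
  have h2 : ∑ σ : S, ((σ.1 a : ℂˣ) : ℂ) = ∑ ψ : Q →* ℂˣ, ((ψ (a : Q) : ℂˣ) : ℂ) :=
    (Equiv.sum_comp e _).symm
  rw [h1, h2, char_sum]
  by_cases ha : a ∈ φ.range
  · obtain ⟨b₀, hb₀⟩ := MonoidHom.mem_range.mp ha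
    rw [if_pos ((QuotientGroup.eq_one_iff _).mpr ha)]
    have e2 : {c : A // φ c = a} ≃ φ.ker :=
      { toFun := fun c => ⟨c.1 * b₀⁻¹, by
          simp [MonoidHom.mem_ker, c.2, hb₀]⟩
        invFun := fun k => ⟨k.1 * b₀, by
          have := MonoidHom.mem_ker.mp k.2
          simp [this, hb₀]⟩
        left_inv := fun c => by ext; simp
        right_inv := fun k => by ext; simp }
    have hA1 : Nat.card A = Nat.card Q * Nat.card φ.range :=
      Subgroup.card_eq_card_quotient_mul_card_subgroup φ.range
    have hA2 : Nat.card A = Nat.card (A ⧸ φ.ker) * Nat.card φ.ker :=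
      Subgroup.card_eq_card_quotient_mul_card_subgroup φ.ker
    have hA3 : Nat.card (A ⧸ φ.ker) = Nat.card φ.range :=
      Nat.card_congr (QuotientGroup.quotientKerEquivRange φ).toEquiv
    have hA4 : Nat.card {c : A // φ c = a} = Nat.card φ.ker := Nat.card_congr e2
    have hpos : 0 < Nat.card φ.range := Nat.card_pos
    have key : Nat.card Q = Nat.card φ.ker := by
      have h5 : Nat.card Q * Nat.card φ.range = Nat.card φ.ker * Nat.card φ.range := by
        rw [← hA1, hA2, hA3, mul_comm]
      exact Nat.eq_of_mul_eq_mul_right hpos h5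
    rw [key, ← hA4, Nat.card_eq_fintype_card]
  · rw [if_neg (fun h => ha ((QuotientGroup.eq_one_iff _).mp h))]
    have : Fintype.card {c : A // φ c = a} = 0 :=
      Fintype.card_eq_zero_iff.mpr ⟨fun c => ha ⟨c.1, c.2⟩⟩
    rw [this]
    simp

/-- Proposition 4.6(3), group case: for a class function `f` on `G` and
`(a, g) ∈ K = A ⋊[α] G`, `(Ind_G^K f)(a, g) = (Σ_{σ ∈ Â, g·σ = σ} σ(a)) · f(g)`. -/
theorem ind_from_G_eval {A G : Type*} [CommGroup A] [Fintype A] [Group G] [Fintype G]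
    (α : G →* MulAut A) (f : G → ℂ) (hf : ∀ s t : G, f (s * t * s⁻¹) = f t)
    (a : A) (g : G) :
    ind (SemidirectProduct.inr : G →* A ⋊[α] G).range (fun x => f x.right) ⟨a, g⟩
      = (∑ᶠ σ ∈ {σ : A →* ℂˣ | ∀ b : A, σ ((α g⁻¹) b) = σ b}, ((σ a : ℂˣ) : ℂ)) * f g := by
  classical
  have hcomp : ∀ (u v : G) (b : A), (α u) ((α v) b) = (α (u * v)) b := fun u v b => by
    rw [map_mul, MulAut.mul_apply]
  have hgg : ∀ b : A, (α g) ((α g⁻¹) b) = b := fun b => by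
    rw [hcomp, mul_inv_cancel, map_one, MulAut.one_apply]
  have hgg' : ∀ b : A, (α g⁻¹) ((α g) b) = b := fun b => by
    rw [hcomp, inv_mul_cancel, map_one, MulAut.one_apply]
  -- the endomorphism φ b = α g b * b⁻¹
  set φ : A →* A :=
    { toFun := fun b => (α g) b * b⁻¹
      map_one' := by simp
      map_mul' := fun b c => by
        simp only [map_mul, mul_inv]
        exact mul_mul_mul_comm _ _ _ _ } with hφ
  have hφapp : ∀ b : A, φ b = (α g) b * b⁻¹ := fun b => rfl
  -- rewrite the fixed-character set
  have hset : {σ : A →* ℂˣ | ∀ b : A, σ ((α g⁻¹) b) = σ b}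
      = {σ : A →* ℂˣ | ∀ b : A, σ (φ b) = 1} := by
    ext σ
    simp only [Set.mem_setOf_eq]
    constructor
    · intro h b
      have h1 : σ ((α g) b) = σ b := by
        have := h ((α g) b)
        rw [hgg'] at this
        exact this.symm
      rw [hφapp, map_mul, map_inv, h1, mul_inv_cancel]
    · intro h b
      have h2 := h ((α g⁻¹) b)
      rw [hφapp, hgg, map_mul, map_inv] at h2
      exact (mul_inv_eq_one.mp h2).symm
  rw [hset, fixed_char_sum]
  -- cardinality of the subgroup
  have hcardH : Nat.card (SemidirectProduct.inr : G →* A ⋊[α] G).range = Nat.card G :=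
    (Nat.card_congr (MonoidHom.ofInjective SemidirectProduct.inr_injective).toEquiv).symm
  have hmem : ∀ x : A ⋊[α] G,
      x ∈ (SemidirectProduct.inr : G →* A ⋊[α] G).range ↔ x.left = 1 := by
    intro x
    constructor
    · rintro ⟨h, rfl⟩; rfl
    · intro h; exact ⟨x.right, by ext <;> simp [h]⟩
  have hleft : ∀ (b : A) (s : G),
      ((⟨b, s⟩ * ⟨a, g⟩ * (⟨b, s⟩)⁻¹ : A ⋊[α] G)).left
        = b * (α s) a * (α (s * g * s⁻¹)) b⁻¹ := by
    intro b s
    simp [map_mul, MulAut.mul_apply]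
  have hright : ∀ (b : A) (s : G),
      ((⟨b, s⟩ * ⟨a, g⟩ * (⟨b, s⟩)⁻¹ : A ⋊[α] G)).right = s * g * s⁻¹ := by
    intro b s
    simp [mul_assoc]
  -- the condition in terms of φ
  have hcond : ∀ (b : A) (s : G),
      (b * (α s) a * (α (s * g * s⁻¹)) b⁻¹ = 1) ↔ φ ((α s⁻¹) b) = a := by
    intro b s
    have hinj := (α s).injective
    have heval : (α s) (φ ((α s⁻¹) b)) = (α (s * g * s⁻¹)) b * b⁻¹ := by
      rw [hφapp, map_mul, map_inv (α s) ((α s⁻¹) b), hcomp g s⁻¹ b, hcomp s (g * s⁻¹) b,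
        hcomp s s⁻¹ b, mul_inv_cancel, map_one, MulAut.one_apply, ← mul_assoc]
    rw [show (φ ((α s⁻¹) b) = a) ↔ ((α s) (φ ((α s⁻¹) b)) = (α s) a) from hinj.eq_iff.symm,
      heval]
    constructor
    · intro h
      have h2 : b * (α s) a = (α (s * g * s⁻¹)) b := by
        rw [map_inv (α (s * g * s⁻¹)) b] at h
        exact mul_inv_eq_one.mp h
      rw [← h2, mul_comm b, mul_inv_cancel_right]
    · intro h
      rw [map_inv (α (s * g * s⁻¹)) b, ← h, mul_comm ((α (s * g * s⁻¹)) b) b⁻¹,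
        mul_inv_cancel_left, mul_inv_cancel]
  -- reindex the sum over the semidirect product
  simp only [ind]
  set F : A ⋊[α] G → ℂ := fun t =>
    if t * ⟨a, g⟩ * t⁻¹ ∈ (SemidirectProduct.inr : G →* A ⋊[α] G).range
    then f ((t * ⟨a, g⟩ * t⁻¹).right) else 0 with hF
  have hsum1 : ∑ t : A ⋊[α] G, F t = ∑ p : A × G, F ⟨p.1, p.2⟩ := by
    refine (Fintype.sum_bijective (fun p : A × G => (⟨p.1, p.2⟩ : A ⋊[α] G))
      ⟨fun p q h => ?_, fun x => ⟨(x.left, x.right), rfl⟩⟩ _ _ (fun p => rfl)).symm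
    exact Prod.ext (congrArg SemidirectProduct.left h) (congrArg SemidirectProduct.right h)
  have hinner : ∀ s : G, ∑ b : A, F ⟨b, s⟩
      = (Fintype.card {c : A // φ c = a} : ℂ) * f g := by
    intro s
    have step1 : ∀ b : A, F ⟨b, s⟩ = if φ ((α s⁻¹) b) = a then f g else 0 := by
      intro b
      rw [hF]
      simp only [hmem, hleft, hright, hcond, hf s g]
    calc ∑ b : A, F ⟨b, s⟩ = ∑ b : A, if φ ((α s⁻¹) b) = a then f g else 0 :=
          Finset.sum_congr rfl fun b _ => step1 b
      _ = ∑ c : A, if φ c = a then f g else 0 :=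
          Fintype.sum_bijective (α s⁻¹ : A → A) (α s⁻¹ : MulAut A).bijective _ _ (fun c => rfl)
      _ = ∑ c ∈ Finset.univ.filter (fun c => φ c = a), f g := (Finset.sum_filter _ _).symm
      _ = (Finset.univ.filter (fun c => φ c = a)).card • f g := Finset.sum_const _
      _ = (Fintype.card {c : A // φ c = a} : ℂ) * f g := by
          rw [Fintype.card_subtype, nsmul_eq_mul]
  -- assemble
  rw [hcardH, hsum1, Fintype.sum_prod_type_right]
  have hG0 : (Fintype.card G : ℂ) ≠ 0 := Nat.cast_ne_zero.mpr Fintype.card_ne_zero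
  calc (1 / (Nat.card G : ℂ)) * ∑ s : G, ∑ b : A, F ⟨b, s⟩
      = (1 / (Nat.card G : ℂ)) *
          ∑ _s : G, (Fintype.card {c : A // φ c = a} : ℂ) * f g := by
        rw [Finset.sum_congr rfl fun s _ => hinner s]
    _ = (Fintype.card {c : A // φ c = a} : ℂ) * f g := by
        rw [Finset.sum_const, Finset.card_univ, Nat.card_eq_fintype_card, nsmul_eq_mul]
        field_simp


end Stmt11
end
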